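/- Let P be a finite index set, and for each p ∈ P let N_p, n_p be nonnegative integers and μ_p a complex number. Then d/ds at s = 0 of the product ∏_{p ∈ P} binom(-N_p - 1 + μ_p s, n_p) equals ∏_{p ∈ P} binom(-N_p - 1, n_p) · Σ_{p ∈ P} μ_p (h_{N_p} - h_{N_p + n_p}), where h_n denotes the n-th harmonic number. -/

import Mathlib

/-!
Each factor `binom(-N - 1 + μ s, n)` is, up to `n!`, a product of the linear functions
`-N - 1 + μ s - i` (`i < n`), none of which vanishes at `s = 0`. Hence every factor has the
logarithmic derivative `μ ∑_{i<n} (-N - 1 - i)⁻¹ = μ (h_N - h_{N+n})` there, and the logarithmic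
derivative of the product is the sum of those of its factors.
-/

/-- Generalized binomial coefficient `binom(z, n) = z(z-1)⋯(z-n+1)/n!` for complex `z`. -/
noncomputable def cbinom (z : ℂ) (n : ℕ) : ℂ :=
  (∏ i ∈ Finset.range n, (z - i)) / (n.factorial : ℂ)

open Finset

section LogDeriv

variable {𝕜 : Type*} [NontriviallyNormedField 𝕜] {ι : Type*} {𝔸 : Type*} [NormedCommRing 𝔸]
  [NormedAlgebra 𝕜 𝔸] {u : Finset ι} {f : ι → 𝕜 → 𝔸} {c : ι → 𝔸} {x : 𝕜}

theorem HasDerivAt.fun_finsetProd_mul_sum (hf : ∀ i ∈ u, HasDerivAt (f i) (f i x * c i) x) :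
    HasDerivAt (∏ i ∈ u, f i ·) ((∏ i ∈ u, f i x) * ∑ i ∈ u, c i) x := by
  classical
  convert HasDerivAt.fun_finsetProd hf using 1
  rw [mul_sum]
  refine sum_congr rfl fun i hi => ?_
  rw [smul_eq_mul, ← mul_assoc, prod_erase_mul u (f · x) hi]

end LogDeriv

theorem hasDerivAt_cbinom {z : ℂ} {n : ℕ} (hz : ∀ i < n, z ≠ i) :
    HasDerivAt (cbinom · n) (cbinom z n * ∑ i ∈ range n, (z - i)⁻¹) z := by
  have hfactor : ∀ i ∈ range n, HasDerivAt (· - (i : ℂ)) ((z - i) * (z - i)⁻¹) z :=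
    fun i hi => by
      rw [mul_inv_cancel₀ (sub_ne_zero.2 (hz i (mem_range.1 hi)))]
      exact (hasDerivAt_id z).sub_const _
  have := (HasDerivAt.fun_finsetProd_mul_sum hfactor).div_const (n.factorial : ℂ)
  rwa [← div_mul_eq_mul_div] at this

theorem hasDerivAt_cbinom_affine {a μ s : ℂ} {n : ℕ} (hs : ∀ i < n, a + μ * s ≠ i) :
    HasDerivAt (fun s => cbinom (a + μ * s) n)
      (cbinom (a + μ * s) n * (μ * ∑ i ∈ range n, (a + μ * s - i)⁻¹)) s := by
  have haffine : HasDerivAt (fun s => a + μ * s) μ s := by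
    simpa using ((hasDerivAt_id s).const_mul μ).const_add a
  have := (hasDerivAt_cbinom hs).comp s haffine
  rwa [mul_assoc, mul_comm _ μ] at this

theorem neg_natCast_sub_one_ne_natCast {R : Type*} [CommRing R] [CharZero R] (N i : ℕ) :
    -(N : R) - 1 ≠ i := by
  intro h
  have : ((N + 1 + i : ℕ) : R) = 0 := by
    push_cast
    linear_combination -h
  exact absurd (Nat.cast_eq_zero.1 this) (by omega)

theorem harmonic_sub_harmonic_add (N n : ℕ) :
    ((harmonic N : ℚ) : ℂ) - ((harmonic (N + n) : ℚ) : ℂ) =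
      ∑ i ∈ range n, (-(N : ℂ) - 1 - i)⁻¹ := by
  induction n with
  | zero => simp
  | succ n ih =>
    rw [← add_assoc, harmonic_succ, sum_range_succ, ← ih]
    push_cast
    rw [show -(N : ℂ) - 1 - n = -(N + n + 1) by ring, inv_neg]
    ring

/-- Derivative at `s = 0` of `s ↦ ∏_p binom(-N_p - 1 + μ_p s, n_p)` equals
`∏_p binom(-N_p-1, n_p) · Σ_p μ_p (h_{N_p} - h_{N_p+n_p})`. -/
theorem deriv_prod_cbinom_at_zero (P : ℕ) (N n : Fin P → ℕ) (μ : Fin P → ℂ) :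
    deriv (fun s : ℂ => ∏ p, cbinom (-(N p : ℂ) - 1 + μ p * s) (n p)) 0 =
      (∏ p, cbinom (-(N p : ℂ) - 1) (n p)) *
        ∑ p, μ p * (((harmonic (N p) : ℚ) : ℂ) - ((harmonic (N p + n p) : ℚ) : ℂ)) := by
  have h := HasDerivAt.fun_finsetProd_mul_sum (u := univ) (x := (0 : ℂ)) fun p _ =>
    hasDerivAt_cbinom_affine (a := -(N p : ℂ) - 1) (μ := μ p) (n := n p) fun i _ => by
      simpa using neg_natCast_sub_one_ne_natCast (N p) i
  simp only [mul_zero, add_zero] at h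
  simp only [h.deriv, harmonic_sub_harmonic_add]
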